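/- arXiv:0904.2022 — 3 statements merged into one kernel-verified Lean document; each statement's English description precedes it below -/
import Mathlib

section
/- Let H ∈ {0,1}^{m×n} ⊆ ℤ^{m×n}, m < n, and S a size-(m+1) subset of columns. The absdet-vector ω based on S, defined by ω_i = |det_ℤ(H_{S∖i})| for i ∈ S and ω_i = 0 otherwise, lies in the fundamental cone of H: ω_i ≥ 0 for all i, and for all rows j and all i with h_{j,i} = 1, ω_i ≤ Σ_{i'≠i, h_{j,i'}=1} ω_{i'}. -/
open Matrix BigOperators

/-- The absdet-vector of `H` based on a size-`(m+1)` column subset `S`: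
`ω i = |det(H_{S∖i})|` for `i ∈ S`, and `0` otherwise. -/
def absdetVec {m n : ℕ} (H : Matrix (Fin m) (Fin n) ℤ) (S : Finset (Fin n))
    (hS : S.card = m + 1) : Fin n → ℤ :=
  fun i =>
    if hi : i ∈ S then
      |(H.submatrix id (fun k =>
          (((S.erase i).orderIsoOfFin
            (by simp [Finset.card_erase_of_mem hi, hS]) k : Fin n)))).det|
    else 0

lemma absdetVec_nonneg {m n : ℕ} (H : Matrix (Fin m) (Fin n) ℤ) (S : Finset (Fin n))
    (hS : S.card = m + 1) (i : Fin n) : 0 ≤ absdetVec H S hS i := by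
  unfold absdetVec
  split
  · exact abs_nonneg _
  · exact le_refl 0

lemma key {m n : ℕ} (H : Matrix (Fin m) (Fin n) ℤ)
    (hH : ∀ j i, H j i = 0 ∨ H j i = 1)
    (S : Finset (Fin n)) (hS : S.card = m + 1)
    (j : Fin m) (i : Fin n) (hji : H j i = 1) :
    absdetVec H S hS i ≤ ∑ i' ∈ (Finset.univ.filter fun i' => H j i' = 1).erase i,
      absdetVec H S hS i' := by
  classical
  have habs := absdetVec_nonneg H S hS
  by_cases hi : i ∈ S
  swap
  · rw [absdetVec, dif_neg hi]
    exact Finset.sum_nonneg fun _ _ => habs _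
  set σ := S.orderEmbOfFin hS with hσdef
  have hσS : ∀ p, σ p ∈ S := fun p => Finset.orderEmbOfFin_mem S hS p
  obtain ⟨k, hk⟩ : ∃ k, σ k = i := by
    have : i ∈ Set.range σ := by rw [Finset.range_orderEmbOfFin]; exact hi
    exact this
  set D : Fin (m + 1) → ℤ :=
    fun p => (H.submatrix id (fun q : Fin m => σ (p.succAbove q))).det with hD
  -- C1
  have hC1 : ∀ p : Fin (m + 1), absdetVec H S hS (σ p) = |D p| := by
    intro p
    have hp : σ p ∈ S := hσS p
    have hcard : (S.erase (σ p)).card = m := by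
      simp [Finset.card_erase_of_mem hp, hS]
    rw [absdetVec, dif_pos hp]
    congr 1
    have hfun : (fun q : Fin m => σ (p.succAbove q)) =
        (S.erase (σ p)).orderEmbOfFin hcard := by
      refine Finset.orderEmbOfFin_unique hcard ?_ ?_
      · intro x
        refine Finset.mem_erase.2 ⟨fun h => Fin.succAbove_ne p x (σ.injective h), hσS _⟩
      · exact σ.strictMono.comp (Fin.strictMono_succAbove p)
    simp only [Finset.coe_orderIsoOfFin_apply]
    rw [← hfun]
  -- C2
  have hC2 : ∑ p : Fin (m + 1), (-1 : ℤ) ^ (p : ℕ) * H j (σ p) * D p = 0 := by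
    set M : Matrix (Fin (m + 1)) (Fin (m + 1)) ℤ :=
      Matrix.of fun p q => H (Fin.cases j (fun l => l) p) (σ q) with hM
    have hdet : M.det = 0 := by
      apply Matrix.det_zero_of_row_eq (i := (0 : Fin (m + 1))) (j := Fin.succ j)
      · exact (Fin.succ_ne_zero j).symm
      · funext q
        simp [hM]
    rw [Matrix.det_succ_row_zero] at hdet
    rw [← hdet]
    apply Finset.sum_congr rfl
    intro p _
    have hMp : M 0 p = H j (σ p) := by simp [hM]
    have hsub : M.submatrix Fin.succ p.succAbove =
        H.submatrix id (fun q : Fin m => σ (p.succAbove q)) := by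
      ext l q
      simp [hM]
    rw [hMp, hsub]
  -- isolate term k
  have hterm : (-1 : ℤ) ^ (k : ℕ) * H j (σ k) * D k =
      -∑ p ∈ Finset.univ.erase k, (-1 : ℤ) ^ (p : ℕ) * H j (σ p) * D p := by
    have h0 := Finset.add_sum_erase Finset.univ
      (fun p : Fin (m + 1) => (-1 : ℤ) ^ (p : ℕ) * H j (σ p) * D p) (Finset.mem_univ k)
    rw [hC2] at h0
    exact eq_neg_of_add_eq_zero_left h0
  have hDk : |D k| ≤ ∑ p ∈ Finset.univ.erase k, |H j (σ p)| * |D p| := by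
    have h1 : |D k| = |(-1 : ℤ) ^ (k : ℕ) * H j (σ k) * D k| := by
      rw [hk, hji]
      simp [abs_mul]
    rw [h1, hterm, abs_neg]
    refine (Finset.abs_sum_le_sum_abs _ _).trans ?_
    apply Finset.sum_le_sum
    intro p _
    rw [abs_mul, abs_mul, abs_pow, abs_neg, abs_one, one_pow, one_mul]
  -- convert to filtered sum
  set K : Finset (Fin (m + 1)) :=
    (Finset.univ.filter fun p => H j (σ p) = 1).erase k with hK
  have hsum2 : ∑ p ∈ Finset.univ.erase k, |H j (σ p)| * |D p| = ∑ p ∈ K, |D p| := by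
    rw [hK]
    rw [show ((Finset.univ.filter fun p => H j (σ p) = 1).erase k)
        = ((Finset.univ.erase k).filter fun p => H j (σ p) = 1) by
      ext p; simp [Finset.mem_erase, Finset.mem_filter, and_comm]]
    rw [Finset.sum_filter]
    apply Finset.sum_congr rfl
    intro p _
    rcases hH j (σ p) with h0 | h1
    · simp [h0]
    · simp [h1]
  -- push through image
  have himg : ∑ p ∈ K, |D p| = ∑ x ∈ K.image σ, absdetVec H S hS x := by
    rw [Finset.sum_image (fun a _ b _ h => σ.injective h)]
    exact (Finset.sum_congr rfl fun p _ => (hC1 p).symm)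
  have hsub : K.image σ ⊆ (Finset.univ.filter fun i' => H j i' = 1).erase i := by
    intro x hx
    obtain ⟨p, hp, rfl⟩ := Finset.mem_image.1 hx
    rw [hK] at hp
    obtain ⟨hpk, hp1⟩ := Finset.mem_erase.1 hp
    refine Finset.mem_erase.2 ⟨?_, ?_⟩
    · rw [← hk]; exact fun h => hpk (σ.injective h)
    · simpa using (Finset.mem_filter.1 hp1).2
  calc absdetVec H S hS i = |D k| := by rw [← hk]; exact hC1 k
    _ ≤ ∑ p ∈ K, |D p| := by rw [← hsum2]; exact hDk
    _ = ∑ x ∈ K.image σ, absdetVec H S hS x := himg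
    _ ≤ _ := Finset.sum_le_sum_of_subset_of_nonneg hsub fun x _ _ => habs x

/-- The fundamental cone of a 0-1 integer matrix `H`, as a subset of `ℝⁿ`. -/
def inFundCone {m n : ℕ} (H : Matrix (Fin m) (Fin n) ℤ) (ω : Fin n → ℝ) : Prop :=
  (∀ i, 0 ≤ ω i) ∧
  ∀ (j : Fin m) (i : Fin n), H j i = 1 →
    ω i ≤ ∑ i' ∈ (Finset.univ.filter fun i' => H j i' = 1).erase i, ω i'

theorem stmt3 {m n : ℕ} (hmn : m < n) (H : Matrix (Fin m) (Fin n) ℤ)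
    (hH : ∀ j i, H j i = 0 ∨ H j i = 1)
    (S : Finset (Fin n)) (hS : S.card = m + 1) :
    inFundCone H (fun i => ((absdetVec H S hS i : ℤ) : ℝ)) := by
  constructor
  · intro i
    show (0 : ℝ) ≤ ((absdetVec H S hS i : ℤ) : ℝ)
    exact_mod_cast absdetVec_nonneg H S hS i
  · intro j i hji
    have h := key H hH S hS j i hji
    show ((absdetVec H S hS i : ℤ) : ℝ) ≤ _
    calc ((absdetVec H S hS i : ℤ) : ℝ)
        ≤ ((∑ i' ∈ (Finset.univ.filter fun i' => H j i' = 1).erase i,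
            absdetVec H S hS i' : ℤ) : ℝ) := by exact_mod_cast h
      _ = _ := by push_cast; rfl
end

section
/- Let H ∈ {0,1}^{m×n} ⊆ ℤ^{m×n}, m < n, and S a size-(m+1) subset of columns. The absdet-vector ω based on S (ω_i = |det_ℤ(H_{S∖i})| for i ∈ S, 0 otherwise) satisfies: ω reduced mod 2 is a codeword of the binary code C = ker_{𝔽₂}(H). -/
open Matrix BigOperators

/-- The absdet-vector reduced mod 2 is a codeword of `ker_{𝔽₂}(H)`. -/
theorem stmt4 {m n : ℕ} (hmn : m < n) (H : Matrix (Fin m) (Fin n) ℤ)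
    (hH : ∀ j i, H j i = 0 ∨ H j i = 1)
    (S : Finset (Fin n)) (hS : S.card = m + 1) :
    (H.map (Int.cast : ℤ → ZMod 2)).mulVec
      (fun i => ((absdetVec H S hS i : ℤ) : ZMod 2)) = 0 := by
  classical
  funext j
  set e := S.orderEmbOfFin hS with he
  -- the (m+1)×(m+1) matrix: row of H j on top of H, restricted to columns of S
  set M : Matrix (Fin (m+1)) (Fin (m+1)) ℤ :=
    Matrix.of (Fin.cases (fun k => H j (e k)) (fun r k => H r (e k))) with hM
  have hdet : M.det = 0 := by
    apply Matrix.det_zero_of_row_eq (i := (0 : Fin (m+1))) (j := j.succ)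
      (Fin.succ_ne_zero j).symm
    funext k
    simp [hM]
  have hZ : ∑ k : Fin (m+1),
      (-1 : ℤ) ^ (k : ℕ) * M 0 k * (M.submatrix Fin.succ k.succAbove).det = 0 := by
    rw [← Matrix.det_succ_row_zero]; exact hdet
  -- image of e is S
  have himg : Finset.image (fun k => e k) Finset.univ = S := by
    apply Finset.coe_injective
    rw [Finset.coe_image, Finset.coe_univ, Set.image_univ]
    exact S.range_orderEmbOfFin hS
  have hinj : Function.Injective (fun k => e k) := e.injective
  show ∑ i, (H.map (Int.cast : ℤ → ZMod 2)) j i *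
      ((absdetVec H S hS i : ℤ) : ZMod 2) = 0
  have hvanish : ∀ i ∈ Finset.univ, i ∉ S →
      (H.map (Int.cast : ℤ → ZMod 2)) j i * ((absdetVec H S hS i : ℤ) : ZMod 2) = 0 := by
    intro i _ hi
    simp [absdetVec, hi]
  rw [← Finset.sum_subset (Finset.subset_univ S) hvanish]
  have key : ∑ x ∈ S, (H.map (Int.cast : ℤ → ZMod 2) j x *
        ((absdetVec H S hS x : ℤ) : ZMod 2)) =
      ∑ k : Fin (m+1), (H.map (Int.cast : ℤ → ZMod 2) j (e k) *
        ((absdetVec H S hS (e k) : ℤ) : ZMod 2)) :=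
    (Finset.sum_bij (fun k _ => e k) (fun k _ => S.orderEmbOfFin_mem hS k)
      (fun a _ b _ h => hinj h)
      (fun x hx => by
        obtain ⟨k, _, hk⟩ := Finset.mem_image.1 (himg ▸ hx)
        exact ⟨k, Finset.mem_univ k, hk⟩)
      (fun k _ => rfl)).symm
  rw [key]
  have hcast : ((∑ k : Fin (m+1),
      (-1 : ℤ) ^ (k : ℕ) * M 0 k * (M.submatrix Fin.succ k.succAbove).det : ℤ)
      : ZMod 2) = 0 := by rw [hZ]; simp
  rw [← hcast]
  push_cast
  apply Finset.sum_congr rfl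
  intro k _
  have hmem : e k ∈ S := S.orderEmbOfFin_mem hS k
  -- identify the minor with the submatrix from absdetVec
  have hcols : ∀ l : Fin m,
      (((S.erase (e k)).orderIsoOfFin
        (by simp [Finset.card_erase_of_mem hmem, hS]) l : Fin n)) =
      e (k.succAbove l) := by
    intro l
    have hcard : (S.erase (e k)).card = m := by
      simp [Finset.card_erase_of_mem hmem, hS]
    rw [Finset.coe_orderIsoOfFin_apply]
    refine (congrFun (Finset.orderEmbOfFin_unique hcard
      (f := fun l => e (k.succAbove l)) ?_ ?_) l).symm
    · intro l
      refine Finset.mem_erase.2 ⟨?_, S.orderEmbOfFin_mem hS _⟩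
      exact fun h => (Fin.succAbove_ne k l) (e.injective h)
    · exact e.strictMono.comp (Fin.strictMono_succAbove k)
  have hsub : (H.submatrix id (fun l =>
      (((S.erase (e k)).orderIsoOfFin
        (by simp [Finset.card_erase_of_mem hmem, hS]) l : Fin n)))) =
      M.submatrix Fin.succ k.succAbove := by
    funext r l
    rw [Matrix.submatrix_apply, Matrix.submatrix_apply, hcols l]
    simp [hM]
  have habs : ((|(M.submatrix Fin.succ k.succAbove).det| : ℤ) : ZMod 2) =
      (((M.submatrix Fin.succ k.succAbove).det : ℤ) : ZMod 2) := by
    rcases abs_choice (M.submatrix Fin.succ k.succAbove).det with h | h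
    · rw [h]
    · rw [h]; push_cast; rw [CharTwo.neg_eq]
  have hM0 : M 0 k = H j (e k) := by simp [hM]
  have hv : ((absdetVec H S hS (e k) : ℤ) : ZMod 2) =
      (((M.submatrix Fin.succ k.succAbove).det : ℤ) : ZMod 2) := by
    rw [absdetVec, dif_pos hmem, hsub, habs]
  rw [hv, hM0]
  have h1 : ((-1 : ZMod 2)) = 1 := by decide
  push_cast
  rw [h1, one_pow, Matrix.map_apply]
  ring
end

section
/- If M is a square 0-1 integer matrix whose associated bipartite graph is acyclic, then |det_ℤ(M)| ∈ {0, 1}. -/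
/-! Expanding the determinant, the only permutations contributing are the perfect
matchings of the bipartite graph, each contributing `± 1`. An acyclic bipartite graph
has at most one perfect matching: if `σ ≠ τ` are two of them and `σ i₀ ≠ τ i₀`, then
following `τ`-edges forward and `σ`-edges back along the cycle of `σ⁻¹ τ` through `i₀`
joins the endpoints of the edge `(i₀, σ i₀)` without using it, so that edge is not a
bridge. -/

open Matrix BigOperators

/-- The bipartite graph associated to a square 0-1 matrix `M`: left vertices
are rows, right vertices are columns, with an edge `(j,k)` iff `M j k = 1`. -/
def bipartiteGraph {m : ℕ} (M : Matrix (Fin m) (Fin m) ℤ) :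
    SimpleGraph (Fin m ⊕ Fin m) :=
  SimpleGraph.fromRel (fun a b => ∃ j k, a = Sum.inl j ∧ b = Sum.inr k ∧ M j k = 1)

namespace SimpleGraph

theorem IsAcyclic.equiv_eq_of_forall_adj {ι κ : Type*} [Finite ι] {G : SimpleGraph (ι ⊕ κ)}
    (hG : G.IsAcyclic) {σ τ : ι ≃ κ} (hσ : ∀ i, G.Adj (.inl i) (.inr (σ i)))
    (hτ : ∀ i, G.Adj (.inl i) (.inr (τ i))) : σ = τ := by
  by_contra hne
  obtain ⟨i₀, hi₀⟩ : ∃ i₀, σ i₀ ≠ τ i₀ := by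
    by_contra! h
    exact hne (Equiv.ext h)
  have hbridge := isAcyclic_iff_forall_adj_isBridge.mp hG (hσ i₀)
  rw [isBridge_iff] at hbridge
  set G' := G.deleteEdges {s(.inl i₀, .inr (σ i₀))}
  have hτ' (i : ι) : G'.Adj (.inl i) (.inr (τ i)) := by
    refine ⟨hτ i, fun h => ?_⟩
    obtain ⟨rfl, h⟩ : i = i₀ ∧ τ i = σ i₀ := by simpa using h
    exact hi₀ h.symm
  have hσ' (i : ι) (hi : i ≠ i₀) : G'.Adj (.inl i) (.inr (σ i)) :=
    ⟨hσ i, fun h => hi (by simpa using h)⟩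
  let h : Equiv.Perm ι := τ.trans σ.symm
  have hσh (i : ι) : σ (h i) = τ i := σ.apply_symm_apply (τ i)
  have reach_right (i : ι) (hi : G'.Reachable (.inl i₀) (.inl i)) :
      G'.Reachable (.inl i₀) (.inr (σ (h i))) :=
    hσh i ▸ hi.trans (hτ' i).reachable
  have reach_step (i : ι) (hi : G'.Reachable (.inl i₀) (.inl i)) :
      G'.Reachable (.inl i₀) (.inl (h i)) := by
    by_cases hhi : h i = i₀
    · rw [hhi]
    · exact (reach_right i hi).trans (hσ' (h i) hhi).symm.reachable
  have reach_orbit (k : ℕ) : G'.Reachable (.inl i₀) (.inl ((h ^ k) i₀)) := by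
    induction k with
    | zero => rfl
    | succ k ih => simpa only [pow_succ', Equiv.Perm.mul_apply] using reach_step _ ih
  obtain ⟨k, hk⟩ :=
    (Equiv.Perm.SameCycle.rfl (f := h) (x := i₀)).symm_apply_right.exists_nat_pow_eq
  apply hbridge
  simpa only [hk, Equiv.apply_symm_apply] using reach_right _ (reach_orbit k)

end SimpleGraph

theorem Matrix.det_eq_sign_mul_prod_of_forall_ne {n R : Type*} [Fintype n] [DecidableEq n]
    [CommRing R] (M : Matrix n n R) (σ₀ : Equiv.Perm n)
    (h : ∀ σ ≠ σ₀, ∃ i, M i (σ i) = 0) :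
    M.det = Equiv.Perm.sign σ₀ * ∏ i, M i (σ₀ i) := by
  rw [← det_transpose, det_apply', Finset.sum_eq_single σ₀ _ (by simp)]
  · rfl
  · intro σ _ hσ
    obtain ⟨i, hi⟩ := h σ hσ
    rw [Finset.prod_eq_zero (Finset.mem_univ i) hi, mul_zero]

lemma bipartiteGraph_adj {m : ℕ} (M : Matrix (Fin m) (Fin m) ℤ) {j k : Fin m}
    (h : M j k = 1) : (bipartiteGraph M).Adj (Sum.inl j) (Sum.inr k) := by
  rw [bipartiteGraph, SimpleGraph.fromRel_adj]
  exact ⟨by simp, Or.inl ⟨j, k, rfl, rfl, h⟩⟩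

/-- If the bipartite graph of a square 0-1 integer matrix is acyclic, then
`|det M| ∈ {0, 1}`. -/
theorem stmt14 {m : ℕ} (M : Matrix (Fin m) (Fin m) ℤ)
    (hM : ∀ j k, M j k = 0 ∨ M j k = 1)
    (hacyc : (bipartiteGraph M).IsAcyclic) :
    |M.det| = 0 ∨ |M.det| = 1 := by
  have hzero {σ : Equiv.Perm (Fin m)} (h : ¬ ∀ i, M i (σ i) = 1) :
      ∃ i, M i (σ i) = 0 :=
    (not_forall.mp h).imp fun i hi => (hM _ _).resolve_right hi
  obtain ⟨σ₀, hσ₀⟩ : ∃ σ₀ : Equiv.Perm (Fin m), ∀ σ ≠ σ₀, ∃ i, M i (σ i) = 0 := by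
    by_cases hex : ∃ σ₀ : Equiv.Perm (Fin m), ∀ i, M i (σ₀ i) = 1
    · obtain ⟨σ₀, h₀⟩ := hex
      refine ⟨σ₀, fun σ hne => hzero fun h => hne ?_⟩
      exact hacyc.equiv_eq_of_forall_adj (fun i => bipartiteGraph_adj M (h i))
        (fun i => bipartiteGraph_adj M (h₀ i))
    · exact ⟨1, fun σ _ => hzero fun h => hex ⟨σ, h⟩⟩
  rw [M.det_eq_sign_mul_prod_of_forall_ne σ₀ hσ₀, abs_mul, abs_unit_intCast, one_mul]
  by_cases hone : ∀ i, M i (σ₀ i) = 1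
  · simp [Finset.prod_eq_one fun i _ => hone i]
  · obtain ⟨i, hi⟩ := hzero hone
    simp [Finset.prod_eq_zero (f := fun i => M i (σ₀ i)) (Finset.mem_univ i) hi]
end
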